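/- arXiv:2405.19078 — 2 statements merged into one kernel-verified Lean document; each statement's English description precedes it below -/
import Mathlib

section
/- For a finite simple graph G, the largest eigenvalue of the Laplacian matrix L(G) is at most the maximum over all edges {u,v} of deg(u) + deg(v). -/
open Matrix

/-!
Let `y` be an eigenvector of the Laplacian with eigenvalue `μ > 0`, normalised (up to sign) so
that its maximum `y u` is positive. Let `v` be a neighbour of `u` minimising `y`. The eigen-equation
at `u` gives `μ y u ≤ deg u (y u - y v)`, and at `v` it gives `deg v (y v - y u) ≤ μ y v`.
Subtracting, `μ (y u - y v) ≤ (deg u + deg v) (y u - y v)`, and `y v < y u` since `μ y u > 0`.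
-/

namespace SimpleGraph

variable {V : Type*} [Fintype V] [DecidableEq V] (G : SimpleGraph V) [DecidableRel G.Adj]

theorem exists_adj_eigenvalue_le_degree_add_degree_of_isMax {μ : ℝ} {y : V → ℝ}
    (hy : G.lapMatrix ℝ *ᵥ y = μ • y) (hμ : 0 < μ) {u : V} (hu : 0 < y u)
    (hmax : ∀ w, y w ≤ y u) :
    ∃ v, G.Adj u v ∧ μ ≤ G.degree u + G.degree v := by
  have eigen_at (w : V) : μ * y w = G.degree w * y w - ∑ z ∈ G.neighborFinset w, y z := by
    rw [← lapMatrix_mulVec_apply, hy, Pi.smul_apply, smul_eq_mul]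
  have hN : (G.neighborFinset u).Nonempty := by
    by_contra hempty
    rw [Finset.not_nonempty_iff_eq_empty] at hempty
    have h := eigen_at u
    rw [← card_neighborFinset_eq_degree, hempty] at h
    simp only [Finset.card_empty, Nat.cast_zero, zero_mul, Finset.sum_empty, sub_zero] at h
    exact (mul_pos hμ hu).ne' h
  obtain ⟨v, hv, hvmin⟩ := Finset.exists_min_image _ y hN
  have hadj : G.Adj u v := (mem_neighborFinset _ _ _).mp hv
  have at_u : μ * y u ≤ G.degree u * (y u - y v) := by
    have := Finset.card_nsmul_le_sum _ y (y v) hvmin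
    rw [nsmul_eq_mul, card_neighborFinset_eq_degree] at this
    linarith [eigen_at u]
  have at_v : G.degree v * (y v - y u) ≤ μ * y v := by
    have := Finset.sum_le_card_nsmul (G.neighborFinset v) y (y u) fun w _ => hmax w
    rw [nsmul_eq_mul, card_neighborFinset_eq_degree] at this
    linarith [eigen_at v]
  have hvu : y v < y u := by
    refine (hmax v).lt_of_ne fun heq => ?_
    rw [heq, sub_self, mul_zero] at at_u
    exact (mul_pos hμ hu).not_ge at_u
  refine ⟨v, hadj, le_of_mul_le_mul_right ?_ (sub_pos.mpr hvu)⟩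
  linarith

theorem exists_adj_eigenvalue_le_degree_add_degree {μ : ℝ} {x : V → ℝ} (hx : x ≠ 0)
    (h : G.lapMatrix ℝ *ᵥ x = μ • x) (hμ : 0 < μ) :
    ∃ u v, G.Adj u v ∧ μ ≤ G.degree u + G.degree v := by
  obtain ⟨w, hw⟩ := Function.ne_iff.mp hx
  obtain ⟨u, -, hu⟩ := Finset.exists_max_image Finset.univ (|x ·|) ⟨w, Finset.mem_univ w⟩
  have hu0 : x u ≠ 0 := abs_pos.mp ((abs_pos.mpr hw).trans_le (hu w (Finset.mem_univ w)))
  rcases hu0.lt_or_gt with hneg | hpos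
  · refine ⟨u, G.exists_adj_eigenvalue_le_degree_add_degree_of_isMax
      (y := -x) (by rw [mulVec_neg, h, smul_neg]) hμ (neg_pos.mpr hneg) fun z => ?_⟩
    have := hu z (Finset.mem_univ z)
    rw [abs_of_neg hneg] at this
    exact (neg_le_abs _).trans this
  · refine ⟨u, G.exists_adj_eigenvalue_le_degree_add_degree_of_isMax h hμ hpos fun z => ?_⟩
    have := hu z (Finset.mem_univ z)
    rw [abs_of_pos hpos] at this
    exact (le_abs_self _).trans this

end SimpleGraph

/-- Anderson–Morley bound: the largest eigenvalue of the Laplacian of a graph with at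
least one edge is at most the maximum of `deg u + deg v` over edges `{u, v}`. -/
theorem stmt8 {V : Type*} [Fintype V] [DecidableEq V]
    (G : SimpleGraph V) [DecidableRel G.Adj]
    (hL : (G.lapMatrix ℝ).IsHermitian)
    (hne : G.edgeFinset.Nonempty) :
    (⨆ i, hL.eigenvalues i) ≤
      G.edgeFinset.sup' hne
        (Sym2.lift ⟨fun u v => (G.degree u : ℝ) + (G.degree v : ℝ),
          fun u v => by ring⟩) := by
  obtain ⟨e, he⟩ := hne
  have : Nonempty V := ⟨e.out.1⟩
  refine ciSup_le fun i => ?_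
  by_cases hμ : 0 < hL.eigenvalues i
  · obtain ⟨u, v, hadj, hle⟩ := G.exists_adj_eigenvalue_le_degree_add_degree
      ((WithLp.ofLp_eq_zero 2).not.mpr (hL.eigenvectorBasis.orthonormal.ne_zero i))
      (hL.mulVec_eigenvectorBasis i) hμ
    exact Finset.le_sup'_of_le _ (b := s(u, v)) (G.mem_edgeFinset.mpr hadj) hle
  · refine (not_lt.mp hμ).trans (le_trans ?_ (Finset.le_sup' _ he))
    induction e with
    | h u v => simp only [Sym2.lift_mk]; positivity
end

section
/- Let B be a real m×n matrix such that every row of B has exactly two nonzero entries, one equal to +1 and one equal to −1 (i.e., B is the incidence matrix of an oriented graph). Then the largest eigenvalue of B^T B is at most the maximum over rows of B of the sum over its two nonzero columns j of the number of rows with a nonzero entry in column j. -/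
/-!
A positive eigenvalue `λ` of `Bᵀ * B` is also an eigenvalue of `B * Bᵀ` (push an eigenvector
through `B`). Gershgorin's theorem gives a row `i` with `λ ≤ ∑ e, |(B * Bᵀ) i e|`, and since the
entries of `B` lie in `[-1, 1]` this is at most `∑ c, |B i c| * ∑ e, |B e c|`, which is bounded by
the sum of the column supports `#{e | B e c ≠ 0}` over the columns `c` with `B i c ≠ 0`.
-/

open Matrix Classical Finset Module.End

theorem Finset.sum_abs_mul_le_sum_filter_ne_zero {ι : Type*} [Fintype ι] {v x : ι → ℝ}
    (hv : ∀ i, |v i| ≤ 1) (hx : ∀ i, 0 ≤ x i) :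
    ∑ i, |v i| * x i ≤ ∑ i ∈ univ.filter (fun i => v i ≠ 0), x i := by
  rw [← sum_filter_of_ne fun i _ h => by simpa using left_ne_zero_of_mul h]
  exact sum_le_sum fun i _ => mul_le_of_le_one_left (hx i) (hv i)

namespace Matrix

theorem hasEigenvalue_mul_swap {K l m : Type*} [Field K] [Fintype l] [Fintype m]
    [DecidableEq l] [DecidableEq m] {A : Matrix l m K} {C : Matrix m l K} {μ : K} (hμ : μ ≠ 0)
    (h : HasEigenvalue (toLin' (C * A)) μ) : HasEigenvalue (toLin' (A * C)) μ := by
  obtain ⟨v, hv⟩ := h.exists_hasEigenvector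
  have hCAv : C *ᵥ (A *ᵥ v) = μ • v := by
    rw [mulVec_mulVec, ← toLin'_apply, hv.apply_eq_smul]
  refine hasEigenvalue_of_hasEigenvector (x := A *ᵥ v) ⟨?_, fun hAv => ?_⟩
  · rw [mem_eigenspace_iff, toLin'_apply, ← mulVec_mulVec, hCAv, mulVec_smul]
  · rw [hAv, mulVec_zero, eq_comm, smul_eq_zero] at hCAv
    exact hv.2 (hCAv.resolve_left hμ)

theorem IsHermitian.hasEigenvalue_eigenvalues {n : Type*} [Fintype n] [DecidableEq n]
    {A : Matrix n n ℝ} (hA : A.IsHermitian) (i : n) :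
    HasEigenvalue (toLin' A) (hA.eigenvalues i) := by
  rw [hasEigenvalue_iff_mem_spectrum, spectrum_toLin']
  exact hA.eigenvalues_mem_spectrum_real i

theorem exists_le_sum_abs_of_hasEigenvalue {n : Type*} [Fintype n] [DecidableEq n]
    {A : Matrix n n ℝ} {μ : ℝ} (h : HasEigenvalue (toLin' A) μ) : ∃ i, μ ≤ ∑ j, |A i j| := by
  obtain ⟨i, hi⟩ := eigenvalue_mem_ball h
  rw [Metric.mem_closedBall, Real.dist_eq] at hi
  simp only [Real.norm_eq_abs] at hi
  refine ⟨i, ?_⟩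
  rw [← add_sum_erase _ _ (mem_univ i)]
  linarith [le_abs_self (μ - A i i), le_abs_self (A i i)]

theorem sum_abs_mul_transpose_le {l m : Type*} [Fintype l] [Fintype m] {B : Matrix l m ℝ}
    (hB : ∀ r c, |B r c| ≤ 1) (i : l) :
    ∑ e, |(B * Bᵀ) i e| ≤
      ∑ c ∈ univ.filter (fun c => B i c ≠ 0), ((univ.filter (fun r => B r c ≠ 0)).card : ℝ) := by
  have hcol : ∀ c, ∑ e, |B e c| ≤ ((univ.filter (fun r => B r c ≠ 0)).card : ℝ) := fun c => by
    simpa [sum_boole] using sum_abs_mul_le_sum_filter_ne_zero (x := fun _ => (1 : ℝ))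
      (fun e => hB e c) (fun _ => zero_le_one)
  calc ∑ e, |(B * Bᵀ) i e| ≤ ∑ e, ∑ c, |B i c| * |B e c| := by
        refine sum_le_sum fun e _ => ?_
        simpa only [mul_apply, transpose_apply, abs_mul] using
          abs_sum_le_sum_abs (fun c => B i c * B e c) univ
    _ = ∑ c, |B i c| * ∑ e, |B e c| := by
        rw [sum_comm]
        simp only [mul_sum]
    _ ≤ ∑ c, |B i c| * (univ.filter (fun r => B r c ≠ 0)).card :=
        sum_le_sum fun c _ => mul_le_mul_of_nonneg_left (hcol c) (abs_nonneg _)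
    _ ≤ _ := sum_abs_mul_le_sum_filter_ne_zero (hB i) fun _ => Nat.cast_nonneg _

end Matrix

/-- Anderson–Morley bound in matrix form: if every row of `B` has exactly two nonzero
entries, one `+1` and one `-1` (so `B` is the incidence matrix of an oriented graph),
then the largest eigenvalue of `Bᵀ * B` is at most the maximum over rows of the sum,
over the two nonzero columns `j` of that row, of the number of rows having a nonzero
entry in column `j`. -/
theorem stmt19 {m n : ℕ} (B : Matrix (Fin m) (Fin n) ℝ)
    (hrow : ∀ i : Fin m, ∃ j k : Fin n, j ≠ k ∧ B i j = 1 ∧ B i k = -1 ∧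
      ∀ l : Fin n, l ≠ j → l ≠ k → B i l = 0)
    (hL : (Bᵀ * B).IsHermitian) :
    (⨆ p, hL.eigenvalues p) ≤
      ⨆ i : Fin m, ∑ j ∈ Finset.univ.filter (fun j : Fin n => B i j ≠ 0),
        ((Finset.univ.filter (fun r : Fin m => B r j ≠ 0)).card : ℝ) := by
  set bound : Fin m → ℝ := fun i => ∑ j ∈ univ.filter (fun j : Fin n => B i j ≠ 0),
    ((univ.filter (fun r : Fin m => B r j ≠ 0)).card : ℝ)
  have hB : ∀ r c, |B r c| ≤ 1 := fun r c => by
    obtain ⟨j, k, -, hj, hk, h0⟩ := hrow r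
    by_cases hcj : c = j
    · simp [hcj, hj]
    by_cases hck : c = k
    · simp [hck, hk]
    simp [h0 c hcj hck]
  have hbound : 0 ≤ ⨆ i, bound i := Real.iSup_nonneg fun i => sum_nonneg fun _ _ => by positivity
  refine Real.iSup_le (fun p => ?_) hbound
  rcases le_or_gt (hL.eigenvalues p) 0 with hp | hp
  · exact hp.trans hbound
  obtain ⟨i, hi⟩ := exists_le_sum_abs_of_hasEigenvalue
    (hasEigenvalue_mul_swap hp.ne' (hL.hasEigenvalue_eigenvalues p))
  calc _ ≤ _ := hi
    _ ≤ bound i := sum_abs_mul_transpose_le hB i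
    _ ≤ _ := le_ciSup (Finite.bddAbove_range bound) i
end
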